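/- arXiv:1209.1054 — 3 statements merged into one kernel-verified Lean document; each statement's English description precedes it below -/
import Mathlib

section
/- A real symmetric 3×3 matrix M has three real, positive and pairwise distinct eigenvalues if and only if: (1a) det M > 0, (1b) tr M > 0, (1c) tr(M²) < (tr M)²; (2) (tr M)² < 3 tr(M²); and (3) |tr M · (5(tr M)² − 9 tr(M²)) − 54 det M| < √2 · (3 tr(M²) − (tr M)²)^{3/2}. -/
/-!
By the spectral theorem `det (x • 1 - M) = (x - a) (x - b) (x - c)` with real `a ≤ b ≤ c`, and
comparing coefficients gives `tr M = p₁`, `tr M² = p₂`, `det M = e₃` in terms of the power sums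
`pᵢ` and elementary symmetric functions `eᵢ` of `a, b, c`. Conditions (1a)–(1c) say
`e₃, e₁, e₂ > 0`, which by Descartes' rule of signs means that all roots are positive. With
`X = 3 p₂ - p₁²` and `S = p₁ (5 p₁² - 9 p₂) - 54 e₃`, which are up to scale the coefficients of the
depressed cubic, `2 X³ - S² = 108 ((a - b) (b - c) (c - a))²` is a multiple of the discriminant, so
condition (3) says exactly that the roots are distinct.
-/

namespace Matrix

theorem two_mul_det_smul_one_sub_fin_three {R : Type*} [CommRing R]
    (M : Matrix (Fin 3) (Fin 3) R) (x : R) :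
    2 * (x • (1 : Matrix (Fin 3) (Fin 3) R) - M).det =
      2 * x ^ 3 - 2 * M.trace * x ^ 2 + (M.trace ^ 2 - (M * M).trace) * x - 2 * M.det := by
  simp only [det_fin_three, trace_fin_three, mul_apply, Fin.sum_univ_three, sub_apply, smul_apply,
    one_apply, Fin.reduceEq, ↓reduceIte, smul_eq_mul]
  ring

theorem trace_eq_and_det_eq_of_det_smul_one_sub_eq {K : Type*} [Field K] [CharZero K]
    (M : Matrix (Fin 3) (Fin 3) K) {a b c : K}
    (h : ∀ x, (x • (1 : Matrix (Fin 3) (Fin 3) K) - M).det = (x - a) * (x - b) * (x - c)) :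
    M.trace = a + b + c ∧ (M * M).trace = a ^ 2 + b ^ 2 + c ^ 2 ∧ M.det = a * b * c := by
  have h0 := M.two_mul_det_smul_one_sub_fin_three 0
  have h1 := M.two_mul_det_smul_one_sub_fin_three 1
  have hneg := M.two_mul_det_smul_one_sub_fin_three (-1)
  rw [h] at h0 h1 hneg
  have hdet : M.det = a * b * c := by linear_combination h0 / 2
  have htr : M.trace = a + b + c := by linear_combination (hneg + h1) / 4 - hdet
  refine ⟨htr, ?_, hdet⟩
  linear_combination (h1 - hneg) / 2 + (M.trace + (a + b + c)) * htr

open Polynomial in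
theorem IsHermitian.det_smul_one_sub_eq_prod_eigenvalues₀ {𝕜 n : Type*} [RCLike 𝕜]
    [Fintype n] [DecidableEq n] {A : Matrix n n 𝕜} (hA : A.IsHermitian) (x : 𝕜) :
    (x • (1 : Matrix n n 𝕜) - A).det = ∏ i, (x - hA.eigenvalues₀ i) := by
  rw [smul_one_eq_diagonal, ← scalar_apply, ← eval_charpoly, hA.charpoly_eq, eval_prod]
  simp only [eval_sub, eval_X, eval_C, eigenvalues]
  exact Fintype.prod_equiv _ _ _ fun _ => rfl

theorem IsSymm.exists_le_le_det_smul_one_sub_eq {M : Matrix (Fin 3) (Fin 3) ℝ}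
    (hM : M.IsSymm) :
    ∃ a b c : ℝ, a ≤ b ∧ b ≤ c ∧
      ∀ x : ℝ, (x • (1 : Matrix (Fin 3) (Fin 3) ℝ) - M).det = (x - a) * (x - b) * (x - c) := by
  have hH : M.IsHermitian := isHermitian_iff_isSymm.2 hM
  -- `eigenvalues₀` lists the eigenvalues in decreasing order, on `Fin (Fintype.card (Fin 3)) = Fin 3`
  let ev : Fin 3 → ℝ := hH.eigenvalues₀
  have hev : Antitone ev := hH.eigenvalues₀_antitone
  refine ⟨ev 2, ev 1, ev 0, hev (by decide), hev (by decide), fun x => ?_⟩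
  have hprod : (x • (1 : Matrix (Fin 3) (Fin 3) ℝ) - M).det = ∏ i, (x - ev i) :=
    hH.det_smul_one_sub_eq_prod_eigenvalues₀ x
  rw [hprod, Fin.prod_univ_three]
  ring

end Matrix

section OrderedRing

variable {R : Type*} [CommRing R] [LinearOrder R] [IsStrictOrderedRing R]

theorem pos_of_elementary_symmetric_pos {a b c : R} (h3 : 0 < a * b * c) (h1 : 0 < a + b + c)
    (h2 : 0 < a * b + b * c + c * a) : 0 < a := by
  by_contra! ha
  have hroot : a ^ 3 - (a + b + c) * a ^ 2 + (a * b + b * c + c * a) * a - a * b * c = 0 := by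
    ring
  nlinarith [mul_nonneg h1.le (sq_nonneg a), mul_nonneg h2.le (neg_nonneg.2 ha),
    mul_nonneg (neg_nonneg.2 ha) (sq_nonneg a)]

theorem pos_and_pos_and_pos_iff_elementary_symmetric_pos {a b c : R} :
    (0 < a ∧ 0 < b ∧ 0 < c) ↔ (0 < a * b * c ∧ 0 < a + b + c ∧ 0 < a * b + b * c + c * a) := by
  refine ⟨fun ⟨ha, hb, hc⟩ => ⟨by positivity, by positivity, by positivity⟩,
    fun ⟨h3, h1, h2⟩ => ⟨pos_of_elementary_symmetric_pos h3 h1 h2, ?_, ?_⟩⟩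
  · exact pos_of_elementary_symmetric_pos (a := b) (b := c) (c := a)
      (by linarith) (by linarith) (by linarith)
  · exact pos_of_elementary_symmetric_pos (a := c) (b := a) (c := b)
      (by linarith) (by linarith) (by linarith)

theorem lt_and_lt_iff_sq_pos {a b c : R} (hab : a ≤ b) (hbc : b ≤ c) :
    a < b ∧ b < c ↔ 0 < ((a - b) * (b - c) * (c - a)) ^ 2 := by
  simp only [sq_pos_iff, mul_ne_zero_iff, sub_ne_zero, hab.lt_iff_ne, hbc.lt_iff_ne]
  constructor
  · rintro ⟨hab', hbc'⟩
    exact ⟨⟨hab', hbc'⟩, (hab.trans_lt (hbc.lt_of_ne hbc')).ne'⟩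
  · exact fun h => h.1

end OrderedRing

theorem two_mul_cube_sub_sq_eq_discr {R : Type*} [CommRing R] (a b c : R) :
    2 * (3 * (a ^ 2 + b ^ 2 + c ^ 2) - (a + b + c) ^ 2) ^ 3 -
        ((a + b + c) * (5 * (a + b + c) ^ 2 - 9 * (a ^ 2 + b ^ 2 + c ^ 2)) - 54 * (a * b * c)) ^ 2 =
      108 * ((a - b) * (b - c) * (c - a)) ^ 2 := by
  ring

theorem abs_lt_sqrt_two_mul_rpow_three_halves_iff {S X : ℝ} (hX : 0 ≤ X) :
    |S| < √2 * X ^ ((3 : ℝ) / 2) ↔ S ^ 2 < 2 * X ^ 3 := by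
  have hsq : (√2 * X ^ ((3 : ℝ) / 2)) ^ 2 = 2 * X ^ 3 := by
    rw [mul_pow, Real.sq_sqrt zero_le_two, ← Real.rpow_natCast _ 2, ← Real.rpow_mul hX]
    norm_num
  rw [← hsq, sq_lt_sq, abs_of_nonneg (by positivity : 0 ≤ √2 * X ^ ((3 : ℝ) / 2))]

theorem pos_lt_lt_iff_power_sum_conditions {a b c : ℝ} (hab : a ≤ b) (hbc : b ≤ c) :
    (0 < a ∧ a < b ∧ b < c) ↔
      ((a * b * c > 0 ∧ a + b + c > 0 ∧ a ^ 2 + b ^ 2 + c ^ 2 < (a + b + c) ^ 2) ∧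
        (a + b + c) ^ 2 < 3 * (a ^ 2 + b ^ 2 + c ^ 2) ∧
        |(a + b + c) * (5 * (a + b + c) ^ 2 - 9 * (a ^ 2 + b ^ 2 + c ^ 2)) - 54 * (a * b * c)| <
          √2 * (3 * (a ^ 2 + b ^ 2 + c ^ 2) - (a + b + c) ^ 2) ^ ((3 : ℝ) / 2)) := by
  set X := 3 * (a ^ 2 + b ^ 2 + c ^ 2) - (a + b + c) ^ 2
  set S := (a + b + c) * (5 * (a + b + c) ^ 2 - 9 * (a ^ 2 + b ^ 2 + c ^ 2)) - 54 * (a * b * c)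
  have he₂ : a ^ 2 + b ^ 2 + c ^ 2 < (a + b + c) ^ 2 ↔ 0 < a * b + b * c + c * a := by
    constructor <;> intro h <;> linarith
  have hdisc : S ^ 2 < 2 * X ^ 3 ↔ a < b ∧ b < c := by
    rw [lt_and_lt_iff_sq_pos hab hbc, ← sub_pos, two_mul_cube_sub_sq_eq_discr]
    exact mul_pos_iff_of_pos_left (by norm_num)
  have hX_nonneg : 0 ≤ X := by nlinarith [sq_nonneg (a - b), sq_nonneg (b - c), sq_nonneg (c - a)]
  rw [he₂, abs_lt_sqrt_two_mul_rpow_three_halves_iff hX_nonneg, hdisc, gt_iff_lt, gt_iff_lt]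
  constructor
  · rintro ⟨ha, hab', hbc'⟩
    refine ⟨pos_and_pos_and_pos_iff_elementary_symmetric_pos.1 ⟨ha, by linarith, by linarith⟩,
      ?_, hab', hbc'⟩
    nlinarith
  · rintro ⟨hpos, -, hab', hbc'⟩
    exact ⟨(pos_and_pos_and_pos_iff_elementary_symmetric_pos.2 hpos).1, hab', hbc'⟩

theorem stmt5 (M : Matrix (Fin 3) (Fin 3) ℝ) (hM : M.IsSymm) :
    (∃ l₁ l₂ l₃ : ℝ, 0 < l₁ ∧ l₁ < l₂ ∧ l₂ < l₃ ∧
      ∀ x : ℝ, (x • (1 : Matrix (Fin 3) (Fin 3) ℝ) - M).det =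
        (x - l₁) * (x - l₂) * (x - l₃)) ↔
    ((M.det > 0 ∧ M.trace > 0 ∧ (M * M).trace < M.trace ^ 2) ∧
     M.trace ^ 2 < 3 * (M * M).trace ∧
     |M.trace * (5 * M.trace ^ 2 - 9 * (M * M).trace) - 54 * M.det| <
       Real.sqrt 2 * (3 * (M * M).trace - M.trace ^ 2) ^ ((3 : ℝ) / 2)) := by
  constructor
  · rintro ⟨l₁, l₂, l₃, hl₁, hl₁₂, hl₂₃, hl⟩
    obtain ⟨htr, htr_sq, hdet⟩ := M.trace_eq_and_det_eq_of_det_smul_one_sub_eq hl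
    rw [htr, htr_sq, hdet]
    exact (pos_lt_lt_iff_power_sum_conditions hl₁₂.le hl₂₃.le).1 ⟨hl₁, hl₁₂, hl₂₃⟩
  · obtain ⟨a, b, c, hab, hbc, hfac⟩ := hM.exists_le_le_det_smul_one_sub_eq
    obtain ⟨htr, htr_sq, hdet⟩ := M.trace_eq_and_det_eq_of_det_smul_one_sub_eq hfac
    rw [htr, htr_sq, hdet]
    intro h
    obtain ⟨ha, hab', hbc'⟩ := (pos_lt_lt_iff_power_sum_conditions hab hbc).2 h
    exact ⟨a, b, c, ha, hab', hbc', hfac⟩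
end

section
/- The real symmetric matrix M = ![![E, 0, 0], ![0, C, B], ![0, B, 0]] (texture with zeros at A, D, F positions) cannot have three positive eigenvalues when B ≠ 0: the conditions tr M > 0, det M > 0, and tr(M²) < (tr M)² are mutually inconsistent. -/
/-! Positivity of the determinant `-E B²` forces `E < 0`. The inequality `tr M² < (tr M)²` reads
`B² < C E`, so `C E > 0` and hence `C < 0` as well, making `tr M = C + E` negative. -/

namespace Matrix

variable (B C E : ℝ)

theorem trace_texture : trace !![E, 0, 0; 0, C, B; 0, B, 0] = C + E := by
  simp [trace_fin_three, add_comm]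

theorem det_texture : det !![E, 0, 0; 0, C, B; 0, B, 0] = -(E * B ^ 2) := by
  simp [det_fin_three, sq, mul_assoc]

theorem trace_texture_mul_self :
    trace (!![E, 0, 0; 0, C, B; 0, B, 0] * !![E, 0, 0; 0, C, B; 0, B, 0]) =
      E ^ 2 + C ^ 2 + 2 * B ^ 2 := by
  rw [mul_fin_three, trace_fin_three]
  simp only [of_apply, cons_val', cons_val_zero, cons_val_one, cons_val_two, empty_val',
    cons_val_fin_one, head_cons, tail_cons, head_fin_const]
  ring

end Matrix

theorem add_neg_of_mul_sq_neg_of_sq_lt_mul {B C E : ℝ} (hdet : E * B ^ 2 < 0)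
    (hBCE : B ^ 2 < C * E) : C + E < 0 := by
  have hE : E < 0 := by nlinarith [sq_nonneg B]
  have hC : C < 0 := by nlinarith [sq_nonneg B]
  linarith

theorem stmt8_general (B C E : ℝ)
    (M : Matrix (Fin 3) (Fin 3) ℝ)
    (hM : M = !![E, 0, 0; 0, C, B; 0, B, 0]) :
    ¬ (M.trace > 0 ∧ M.det > 0 ∧ (M * M).trace < M.trace ^ 2) := by
  rintro ⟨htr, hdet, hsq⟩
  subst hM
  rw [Matrix.trace_texture] at htr hsq
  rw [Matrix.det_texture, gt_iff_lt, neg_pos] at hdet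
  rw [Matrix.trace_texture_mul_self] at hsq
  have hBCE : B ^ 2 < C * E := by linarith
  linarith [add_neg_of_mul_sq_neg_of_sq_lt_mul hdet hBCE]

theorem stmt8 (B C E : ℝ) (hB : B ≠ 0)
    (M : Matrix (Fin 3) (Fin 3) ℝ)
    (hM : M = !![E, 0, 0; 0, C, B; 0, B, 0]) :
    ¬ (M.trace > 0 ∧ M.det > 0 ∧ (M * M).trace < M.trace ^ 2) :=
  stmt8_general B C E M hM
end

section
/- The diagonal matrix diag(a₁, a₂, a₃) with a₁, a₂, a₃ positive and pairwise distinct (obtained as texture M(B,D,F), i.e., all off-diagonal entries zero) satisfies all three conditions: det M > 0, tr M > 0, tr(M²) < (tr M)², (tr M)² < 3 tr(M²), and |tr M(5(tr M)² − 9 tr M²) − 54 det M| < √2(3 tr M² − (tr M)²)^{3/2}. -/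
/-!
For M = diag(a₁, a₂, a₃) the trace invariants are the power sums of the aᵢ, and the last
condition is the positivity of the discriminant of the characteristic polynomial: with
s = tr M, q = tr M² and d = det M one has the identity
  2 (3q - s²)³ - (s (5s² - 9q) - 54 d)² = 108 ((a₁ - a₂)(a₂ - a₃)(a₁ - a₃))²,
whose right-hand side is positive exactly when the aᵢ are pairwise distinct.
-/

namespace Matrix

variable {R : Type*} [CommRing R] (a b c : R)

theorem det_diagonal_fin_three : (diagonal ![a, b, c]).det = a * b * c := by
  simp [det_diagonal, Fin.prod_univ_three]

theorem trace_diagonal_fin_three : (diagonal ![a, b, c]).trace = a + b + c := by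
  simp [trace_diagonal, Fin.sum_univ_three]

theorem trace_diagonal_mul_self_fin_three :
    (diagonal ![a, b, c] * diagonal ![a, b, c]).trace = a ^ 2 + b ^ 2 + c ^ 2 := by
  simp [trace_diagonal, Fin.sum_univ_three, sq]

end Matrix

theorem two_mul_cube_sub_sq_eq_discriminant {R : Type*} [CommRing R] (a b c : R) :
    2 * (3 * (a ^ 2 + b ^ 2 + c ^ 2) - (a + b + c) ^ 2) ^ 3
      - ((a + b + c) * (5 * (a + b + c) ^ 2 - 9 * (a ^ 2 + b ^ 2 + c ^ 2)) - 54 * (a * b * c)) ^ 2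
      = 108 * ((a - b) * (b - c) * (a - c)) ^ 2 := by
  ring

theorem sq_add_sq_add_sq_lt_sq_add_add {a b c : ℝ} (ha : 0 < a) (hb : 0 < b) (hc : 0 < c) :
    a ^ 2 + b ^ 2 + c ^ 2 < (a + b + c) ^ 2 := by
  nlinarith [mul_pos ha hb, mul_pos hb hc, mul_pos ha hc]

theorem sq_add_add_lt_three_mul_sq_add_sq_add_sq {a b c : ℝ} (hab : a ≠ b) :
    (a + b + c) ^ 2 < 3 * (a ^ 2 + b ^ 2 + c ^ 2) := by
  nlinarith [sq_pos_of_ne_zero (sub_ne_zero.mpr hab), sq_nonneg (b - c), sq_nonneg (a - c)]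

theorem abs_lt_sqrt_two_mul_rpow_three_halves {x t : ℝ} (ht : 0 ≤ t) (h : x ^ 2 < 2 * t ^ 3) :
    |x| < Real.sqrt 2 * t ^ ((3 : ℝ) / 2) := by
  have h_rhs : Real.sqrt 2 * t ^ ((3 : ℝ) / 2) = Real.sqrt (2 * t ^ 3) := by
    rw [Real.sqrt_mul zero_le_two, Real.sqrt_eq_rpow (t ^ 3), ← Real.rpow_natCast, ← Real.rpow_mul ht]
    norm_num
  rwa [h_rhs, Real.lt_sqrt (abs_nonneg x), sq_abs]

theorem stmt13 (a₁ a₂ a₃ : ℝ) (h₁ : 0 < a₁) (h₂ : a₁ < a₂) (h₃ : a₂ < a₃)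
    (M : Matrix (Fin 3) (Fin 3) ℝ)
    (hM : M = Matrix.diagonal ![a₁, a₂, a₃]) :
    M.det > 0 ∧ M.trace > 0 ∧ (M * M).trace < M.trace ^ 2 ∧
    M.trace ^ 2 < 3 * (M * M).trace ∧
    |M.trace * (5 * M.trace ^ 2 - 9 * (M * M).trace) - 54 * M.det| <
      Real.sqrt 2 * (3 * (M * M).trace - M.trace ^ 2) ^ ((3 : ℝ) / 2) := by
  subst hM
  rw [Matrix.det_diagonal_fin_three, Matrix.trace_diagonal_fin_three,
    Matrix.trace_diagonal_mul_self_fin_three]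
  have h₂' : 0 < a₂ := h₁.trans h₂
  have h₃' : 0 < a₃ := h₂'.trans h₃
  have h_spread := sq_add_add_lt_three_mul_sq_add_sq_add_sq (c := a₃) h₂.ne
  refine ⟨by positivity, by positivity, sq_add_sq_add_sq_lt_sq_add_add h₁ h₂' h₃', h_spread,
    abs_lt_sqrt_two_mul_rpow_three_halves (by linarith) ?_⟩
  have h_disc : 0 < ((a₁ - a₂) * (a₂ - a₃) * (a₁ - a₃)) ^ 2 :=
    sq_pos_of_ne_zero <| mul_ne_zero (mul_ne_zero (sub_ne_zero.2 h₂.ne) (sub_ne_zero.2 h₃.ne))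
      (sub_ne_zero.2 (h₂.trans h₃).ne)
  linarith [two_mul_cube_sub_sq_eq_discriminant a₁ a₂ a₃]
end
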